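/- arXiv:math/0004021 — 6 statements merged into one kernel-verified Lean document; each statement's English description precedes it below -/
import Mathlib

section
/- Let G be a group normally generated by elements x_1, ..., x_n, and let MG be the quotient of G by the normal closure of all commutators [x_i, x_i^y] for 1 ≤ i ≤ n and y ∈ G (the Milnor group of G). Then MG is nilpotent of class at most n, i.e. the (n+1)-st term of its lower central series is trivial. -/
/-!
The images `sᵢ` of the `xᵢ` in the Milnor group commute with all their conjugates; this alone
forces `γₙ = 1`, where `γₖ = (⊤ : Subgroup Q).lowerCentralSeries k` (so `γ₀ = Q`). By induction
on `n`: with `n + 1` generators, let `Nᵢ` be the normal closure of `sᵢ`, which `sᵢ` centralizes.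
Killing `sᵢ` leaves a group normally generated by the other `n`, so by induction `γₙ ≤ Nᵢ` for
every `i`. Hence every `sᵢ` centralizes the normal subgroup `γₙ`, so does their normal closure, the
whole group, and `γₙ₊₁ = 1`.
-/

/-- The subgroup of relators defining the Milnor group: the normal closure of all
commutators `[xᵢ, xᵢ^y] = xᵢ⁻¹ (y⁻¹ xᵢ y)⁻¹ xᵢ (y⁻¹ xᵢ y)` for `y ∈ G`. -/
def milnorRelators {G : Type*} [Group G] {n : ℕ} (x : Fin n → G) : Subgroup G :=
  Subgroup.normalClosure
    {g : G | ∃ (i : Fin n) (y : G),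
      g = (x i)⁻¹ * (y⁻¹ * x i * y)⁻¹ * x i * (y⁻¹ * x i * y)}

instance {G : Type*} [Group G] {n : ℕ} (x : Fin n → G) : (milnorRelators x).Normal :=
  Subgroup.normalClosure_normal

open Subgroup

def CommutesWithConjugates {Q : Type*} [Group Q] (g : Q) : Prop :=
  ∀ y : Q, Commute g (y⁻¹ * g * y)

namespace CommutesWithConjugates

variable {Q R : Type*} [Group Q] [Group R] {g : Q}

theorem map {f : Q →* R} (hf : Function.Surjective f) (hg : CommutesWithConjugates g) :
    CommutesWithConjugates (f g) := by
  intro y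
  obtain ⟨z, rfl⟩ := hf y
  simpa only [map_mul, map_inv] using (hg z).map f

theorem normalClosure_le_centralizer (hg : CommutesWithConjugates g) :
    normalClosure {g} ≤ centralizer {g} := by
  refine (closure_le _).2 fun a ha => ?_
  obtain ⟨_, rfl, hconj⟩ := Group.mem_conjugatesOfSet_iff.1 ha
  obtain ⟨y, rfl⟩ := isConj_iff.1 hconj
  rw [SetLike.mem_coe, mem_centralizer_singleton_iff]
  simpa only [inv_inv] using (hg y⁻¹).symm.eq

theorem mem_centralizer_of_le_normalClosure (hg : CommutesWithConjugates g) {K : Subgroup Q}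
    (hK : K ≤ normalClosure {g}) : g ∈ centralizer K :=
  fun _ ha => (mem_centralizer_singleton_iff.1 (hg.normalClosure_le_centralizer (hK ha)))

end CommutesWithConjugates

namespace Subgroup

variable {Q R : Type*} [Group Q] [Group R] {n : ℕ}

theorem normalClosure_range_comp_eq_top {ι : Type*} {s : ι → Q} {f : Q →* R}
    (hf : Function.Surjective f) (hs : normalClosure (Set.range s) = ⊤) :
    normalClosure (Set.range (f ∘ s)) = ⊤ := by
  rw [Set.range_comp, ← map_normalClosure _ _ hf, hs, map_top_of_surjective f hf]

theorem normalClosure_range_succAbove_eq_top {s : Fin (n + 1) → Q}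
    (hs : normalClosure (Set.range s) = ⊤) {i : Fin (n + 1)} (hi : s i = 1) :
    normalClosure (Set.range (s ∘ i.succAbove)) = ⊤ := by
  refine eq_top_iff.2 (hs ▸ normalClosure_le_normal ?_)
  rintro _ ⟨j, rfl⟩
  rcases eq_or_ne j i with rfl | hji
  · rw [hi]
    exact one_mem _
  · obtain ⟨k, rfl⟩ := Fin.exists_succAbove_eq hji
    exact subset_normalClosure ⟨k, rfl⟩

theorem lowerCentralSeries_le_of_quotient {N : Subgroup Q} [N.Normal]
    (h : (⊤ : Subgroup (Q ⧸ N)).lowerCentralSeries n = ⊥) :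
    (⊤ : Subgroup Q).lowerCentralSeries n ≤ N := by
  rw [← QuotientGroup.ker_mk' N, ← map_eq_bot_iff, map_lowerCentralSeries,
    map_top_of_surjective _ (QuotientGroup.mk'_surjective N), h]

theorem lowerCentralSeries_eq_bot_of_commutesWithConjugates (s : Fin n → Q)
    (hgen : normalClosure (Set.range s) = ⊤) (hs : ∀ i, CommutesWithConjugates (s i)) :
    (⊤ : Subgroup Q).lowerCentralSeries n = ⊥ := by
  induction n generalizing Q with
  | zero =>
    rw [Set.range_eq_empty, normalClosure_empty] at hgen
    exact hgen.symm
  | succ n ih =>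
    have hle (i : Fin (n + 1)) :
        (⊤ : Subgroup Q).lowerCentralSeries n ≤ normalClosure {s i} := by
      let π := QuotientGroup.mk' (normalClosure {s i})
      have hπ := QuotientGroup.mk'_surjective (normalClosure {s i})
      refine lowerCentralSeries_le_of_quotient <|
        ih (π ∘ s ∘ i.succAbove) ?_ fun _ => (hs _).map hπ
      refine normalClosure_range_succAbove_eq_top (normalClosure_range_comp_eq_top hπ hgen) ?_
      exact (QuotientGroup.eq_one_iff _).2 (subset_normalClosure rfl)
    have hcentral : normalClosure (Set.range s) ≤
        centralizer ((⊤ : Subgroup Q).lowerCentralSeries n : Set Q) :=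
      normalClosure_le_normal <| Set.range_subset_iff.2 fun i =>
        (hs i).mem_centralizer_of_le_normalClosure (hle i)
    rw [hgen, ← eq_top_iff, centralizer_eq_top_iff_subset] at hcentral
    exact lowerCentralSeries_succ_eq_bot _ hcentral

end Subgroup

open scoped commutatorElement in
theorem commutesWithConjugates_mk_milnorRelators {G : Type*} [Group G] {n : ℕ} (x : Fin n → G)
    (i : Fin n) : CommutesWithConjugates (QuotientGroup.mk' (milnorRelators x) (x i)) := by
  refine fun y => ?_
  obtain ⟨z, rfl⟩ := QuotientGroup.mk'_surjective _ y
  -- Mathlib's `⁅a, b⁆` is `a * b * a⁻¹ * b⁻¹`, so the Milnor relator is `⁅xᵢ⁻¹, (xᵢ^z)⁻¹⁆`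
  have hrel : ⁅(x i)⁻¹, (z⁻¹ * x i * z)⁻¹⁆ ∈ milnorRelators x :=
    subset_normalClosure ⟨i, z, by rw [commutatorElement_def, inv_inv, inv_inv]⟩
  rw [← QuotientGroup.eq_one_iff, ← QuotientGroup.mk'_apply, map_commutatorElement,
    commutatorElement_eq_one_iff_commute, map_inv, map_inv, Commute.inv_inv_iff] at hrel
  simpa only [map_mul, map_inv] using hrel

/-- If `G` is normally generated by `x₁, …, xₙ`, then the Milnor group
`MG = G/⟪[xᵢ, xᵢ^y]⟫` is nilpotent of class at most `n`, i.e. the `(n+1)`-st term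
of its lower central series (`G₁ = G`, `G_{k+1} = [G, G_k]`) is trivial. -/
theorem milnorGroup_nilpotent {G : Type*} [Group G] {n : ℕ} (x : Fin n → G)
    (hgen : Subgroup.normalClosure (Set.range x) = ⊤) :
    Subgroup.lowerCentralSeries (⊤ : Subgroup (G ⧸ milnorRelators x)) n = ⊥ :=
  lowerCentralSeries_eq_bot_of_commutesWithConjugates _
    (normalClosure_range_comp_eq_top (QuotientGroup.mk'_surjective _) hgen)
    (commutesWithConjugates_mk_milnorRelators x)
end

section
/- Every finitely generated nilpotent group is finitely presented. -/
/-!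
Induct on the nilpotency class, passing from `G` to `G ⧸ center G`. For the step, take a
surjection `φ : F → G` from a finitely generated free group. As `G ⧸ center G` is finitely
presented, the kernel of `F → G ⧸ center G` is the normal closure of a finite set `T`. Adding the
relators `⁅x, t⁆` (`x` a generator, `t ∈ T`) to `F` gives a finitely presented group `P` in which
the images of `T` are central; they generate a finitely generated abelian subgroup `A` of `P` that
contains the kernel of `P → G`. Subgroups of finitely generated abelian groups are finitely
generated, and a finitely generated central subgroup is normally generated by finitely many
elements, so `G` is a quotient of `P` by finitely many more relators.
-/

/-- A group is finitely presented if it is isomorphic to the quotient of a finitely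
generated free group by the normal closure of a finite set of relators. -/
def IsFinitelyPresented (G : Type*) [Group G] : Prop :=
  ∃ (m : ℕ) (S : Finset (FreeGroup (Fin m))),
    Nonempty (G ≃* FreeGroup (Fin m) ⧸
      Subgroup.normalClosure (S : Set (FreeGroup (Fin m))))

open Subgroup Function
open scoped commutatorElement

namespace Subgroup

variable {G : Type*} [Group G]

theorem normal_of_le_center {H : Subgroup G} (hH : H ≤ center G) : H.Normal :=
  ⟨fun n hn g => by rwa [mem_center_iff.mp (hH hn) g, mul_inv_cancel_right]⟩

theorem isMulCommutative_of_le_center {H : Subgroup G} (hH : H ≤ center G) :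
    IsMulCommutative H :=
  IsMulCommutative.of_setLike_mul_comm fun _ _ _ hb => mem_center_iff.mp (hH hb) _

theorem normalClosure_eq_closure_of_subset_center {s : Set G} (hs : s ⊆ center G) :
    normalClosure s = closure s :=
  have := normal_of_le_center ((closure_le _).mpr hs)
  le_antisymm (normalClosure_le_normal subset_closure) closure_le_normalClosure

theorem mem_center_of_forall_commute {s : Set G} (hs : closure s = ⊤) {x : G}
    (hx : ∀ g ∈ s, Commute g x) : x ∈ center G := by
  rw [← centralizer_univ, ← coe_top, ← hs, centralizer_closure]
  exact mem_centralizer_iff.mpr hx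

theorem fg_of_commGroup {A : Type*} [CommGroup A] [Group.FG A] (H : Subgroup A) : H.FG := by
  have : Module.Finite ℤ (Additive A) :=
    Module.Finite.iff_addGroup_fg.mpr (GroupFG.iff_add_fg.mp ‹_›)
  rw [fg_iff_add_fg, ← AddSubgroup.toIntSubmodule_toAddSubgroup H.toAddSubgroup,
    ← Submodule.fg_iff_addSubgroup_fg]
  exact IsNoetherian.noetherian _

open scoped IsMulCommutative in
theorem FG.of_le {H K : Subgroup G} [IsMulCommutative K] (hK : K.FG) (hHK : H ≤ K) : H.FG := by
  have : Group.FG K := (Group.fg_iff_subgroup_fg K).mpr hK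
  have : Group.FG (H.subgroupOf K) := (Group.fg_iff_subgroup_fg _).mpr (fg_of_commGroup _)
  exact (Group.fg_iff_subgroup_fg H).mp <| Group.fg_of_surjective
    (f := (subgroupOfEquivOfLe hHK : H.subgroupOf K →* H)) (subgroupOfEquivOfLe hHK).surjective

end Subgroup

namespace FreeGroup

variable {α H : Type*} [Group H]

theorem ker_eq_normalClosure_of_comp_eq_id (p : FreeGroup α →* H) (s : H →* FreeGroup α)
    (hps : p.comp s = MonoidHom.id H) :
    p.ker = normalClosure (Set.range fun a => of a * (s (p (of a)))⁻¹) := by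
  set N := normalClosure (Set.range fun a => of a * (s (p (of a)))⁻¹)
  have hsp : (QuotientGroup.mk' N).comp (s.comp p) = QuotientGroup.mk' N :=
    ext_hom _ _ fun a => (QuotientGroup.eq_iff_div_mem.mpr
      (by rw [div_eq_mul_inv]; exact subset_normalClosure ⟨a, rfl⟩)).symm
  refine le_antisymm (fun x hx => ?_) (normalClosure_le_normal ?_)
  · rw [← QuotientGroup.ker_mk' N, MonoidHom.mem_ker, ← hsp, MonoidHom.comp_apply,
      MonoidHom.comp_apply, MonoidHom.mem_ker.mp hx, _root_.map_one, _root_.map_one]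
  · rintro _ ⟨a, rfl⟩
    rw [SetLike.mem_coe, MonoidHom.mem_ker, _root_.map_mul, _root_.map_inv,
      ← MonoidHom.comp_apply p s, hps, MonoidHom.id_apply, mul_inv_cancel]

theorem ker_isFinitelyNormallyGenerated_of_comp_eq_id [Finite α] (p : FreeGroup α →* H)
    (s : H →* FreeGroup α) (hps : p.comp s = MonoidHom.id H) :
    p.ker.IsFinitelyNormallyGenerated :=
  ⟨_, Set.finite_range _, (ker_eq_normalClosure_of_comp_eq_id p s hps).symm⟩

theorem mk_mem_center_of_forall_commutatorElement_mem {R : Set (FreeGroup α)} {t : FreeGroup α}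
    (ht : ∀ a : α, ⁅of a, t⁆ ∈ R) :
    QuotientGroup.mk' (normalClosure R) t ∈ center (FreeGroup α ⧸ normalClosure R) := by
  set π := QuotientGroup.mk' (normalClosure R)
  refine mem_center_of_forall_commute (s := Set.range (π ∘ of)) ?_ ?_
  · rw [Set.range_comp, ← MonoidHom.map_closure, closure_range_of,
      map_top_of_surjective _ (QuotientGroup.mk'_surjective _)]
  · rintro _ ⟨a, rfl⟩
    rw [comp_apply, ← commutatorElement_eq_one_iff_commute, ← map_commutatorElement,
      ← MonoidHom.mem_ker, QuotientGroup.ker_mk']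
    exact subset_normalClosure (ht a)

end FreeGroup

namespace Group.IsFinitelyPresented

variable {G : Type*} [Group G]

/- `f` and the given presentation `ψ` both factor through the free group on the disjoint union of
their generators, via retractions `p` and `p'`, whose kernels are finitely normally generated. -/
theorem ker_isFinitelyNormallyGenerated [IsFinitelyPresented G] {α : Type*} [Finite α]
    (f : FreeGroup α →* G) (hf : Surjective f) : f.ker.IsFinitelyNormallyGenerated := by
  obtain ⟨n, ψ, hψ, hψker⟩ := ‹IsFinitelyPresented G›
  choose w hw using fun j => hf (ψ (.of j))
  choose v hv using fun a => hψ (f (.of a))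
  let p : FreeGroup (α ⊕ Fin n) →* FreeGroup α := FreeGroup.lift (Sum.elim .of w)
  let p' : FreeGroup (α ⊕ Fin n) →* FreeGroup (Fin n) := FreeGroup.lift (Sum.elim v .of)
  have hp : p.comp (FreeGroup.map Sum.inl) = MonoidHom.id _ :=
    FreeGroup.ext_hom _ _ fun _ => by simp [p]
  have hp' : p'.comp (FreeGroup.map Sum.inr) = MonoidHom.id _ :=
    FreeGroup.ext_hom _ _ fun _ => by simp [p']
  have hpp' : f.comp p = ψ.comp p' := FreeGroup.ext_hom _ _ fun
    | .inl a => by simp [p, p', hv]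
    | .inr j => by simp [p, p', hw]
  have hp_surj : Surjective p := fun x => ⟨_, DFunLike.congr_fun hp x⟩
  have hp'_surj : Surjective p' := fun x => ⟨_, DFunLike.congr_fun hp' x⟩
  have hker : f.ker = (ψ.ker.comap p').map p := by
    rw [MonoidHom.comap_ker, ← hpp', ← MonoidHom.comap_ker,
      map_comap_eq_self_of_surjective hp_surj]
  rw [hker]
  exact (hψker.comap hp'_surj
    (FreeGroup.ker_isFinitelyNormallyGenerated_of_comp_eq_id p' _ hp')).map hp_surj

theorem of_surjective_of_ker_le_fg_of_le_center {P : Type*} [Group P] [IsFinitelyPresented P]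
    (f : P →* G) (hf : Surjective f) {A : Subgroup P} (hA : A.FG) (hAc : A ≤ center P)
    (hker : f.ker ≤ A) : IsFinitelyPresented G := by
  have := isMulCommutative_of_le_center hAc
  obtain ⟨S, hS⟩ := hA.of_le hker
  refine of_surjective f hf ⟨S, S.finite_toSet, ?_⟩
  rw [normalClosure_eq_closure_of_subset_center, hS]
  exact fun x hx => hAc (hker (hS ▸ subset_closure hx))

theorem of_quotient_of_le_center [Group.FG G] (N : Subgroup G) [N.Normal] (hN : N ≤ center G)
    [IsFinitelyPresented (G ⧸ N)] : IsFinitelyPresented G := by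
  obtain ⟨α, _, φ, hφ⟩ := Group.fg_iff_exists_freeGroup_hom_surjective_finite.mp ‹_›
  set ψ := (QuotientGroup.mk' N).comp φ
  obtain ⟨T, hT, hTker⟩ := ker_isFinitelyNormallyGenerated ψ
    ((QuotientGroup.mk'_surjective N).comp hφ)
  have hφT : ∀ t ∈ T, φ t ∈ center G := fun t ht =>
    hN <| (QuotientGroup.eq_one_iff _).mp (hTker ▸ subset_normalClosure ht : t ∈ ψ.ker)
  set R : Set (FreeGroup α) := Set.image2 (fun (a : α) t => ⁅FreeGroup.of a, t⁆) Set.univ T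
  have hR : normalClosure R ≤ φ.ker := normalClosure_le_normal <| by
    rintro _ ⟨a, -, t, ht, rfl⟩
    rw [SetLike.mem_coe, MonoidHom.mem_ker, map_commutatorElement,
      commutatorElement_eq_one_iff_commute]
    exact mem_center_iff.mp (hφT t ht) _
  have : IsFinitelyPresented (FreeGroup α ⧸ normalClosure R) :=
    quotient _ ⟨R, Set.finite_univ.image2 _ hT, rfl⟩
  set π := QuotientGroup.mk' (normalClosure R)
  have hTc : π '' T ⊆ center (FreeGroup α ⧸ normalClosure R) := by
    rintro _ ⟨t, ht, rfl⟩
    exact FreeGroup.mk_mem_center_of_forall_commutatorElement_mem fun a => ⟨a, trivial, t, ht, rfl⟩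
  refine of_surjective_of_ker_le_fg_of_le_center (QuotientGroup.lift _ φ hR)
    (QuotientGroup.lift_surjective_of_surjective _ φ hφ hR) (A := closure (π '' T))
    ⟨(hT.image π).toFinset, by simp⟩ ((closure_le _).mpr hTc) ?_
  intro x hx
  obtain ⟨w, rfl⟩ := QuotientGroup.mk'_surjective _ x
  have : w ∈ ψ.ker := by simp [ψ, (MonoidHom.mem_ker.mp hx : φ w = 1)]
  rw [← normalClosure_eq_closure_of_subset_center hTc,
    ← map_normalClosure _ _ (QuotientGroup.mk'_surjective _), hTker]
  exact mem_map_of_mem _ this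

end Group.IsFinitelyPresented

theorem IsFinitelyPresented.of_group_isFinitelyPresented (G : Type*) [Group G]
    [Group.IsFinitelyPresented G] : IsFinitelyPresented G := by
  obtain ⟨n, s, hs, ⟨e⟩⟩ := Group.IsFinitelyPresented.exists_mulEquiv_presentedGroup (G := G)
  exact ⟨n, hs.toFinset, ⟨e.trans (QuotientGroup.quotientMulEquivOfEq (by rw [hs.coe_toFinset]))⟩⟩

/-- Every finitely generated nilpotent group is finitely presented. -/
theorem nilpotent_fg_isFinitelyPresented (G : Type*) [Group G]
    (hG : Group.IsNilpotent G) (hfg : Group.FG G) : IsFinitelyPresented G := by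
  suffices Group.IsFinitelyPresented G from .of_group_isFinitelyPresented G
  refine Group.nilpotent_center_quotient_ind
    (P := fun G _ _ => Group.FG G → Group.IsFinitelyPresented G)
    G (fun _ _ _ _ => inferInstance) (fun G _ _ ih _ => ?_) hfg
  have := ih inferInstance
  exact .of_quotient_of_le_center (center G) le_rfl
end

section
/- Let G be a group normally generated by x_1, ..., x_n. Then the Milnor group MG is finitely presented; in fact MG is a finitely generated nilpotent group generated by the images of x_1, ..., x_n. -/
/-!
In `MG` each `xᵢ` commutes with all of its conjugates, so the normal closure of `xᵢ` is an
abelian normal subgroup, and `MG` is the join of these `n` subgroups. Quotienting by one of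
them and inducting shows that `γₙ(MG)` lies in each of them, hence commutes with all of
them: `MG` is nilpotent of class at most `n`. In a nilpotent group a subgroup that
supplements the commutator subgroup is everything, so the images of the `xᵢ`, which
normally generate `MG`, generate it.

A finitely generated group `Q` with `γ_c(Q) = 1` is finitely presented: if `F` is free of
finite rank onto `Q`, then `γ_c(F)` is normally generated by the finitely many iterated
commutators of the free generators, and the kernel of `F/γ_c(F) → Q` is finitely generated
because every subgroup of a finitely generated nilpotent group is (induct on `c`, the last
term `γ_{c-1}` being central and generated by finitely many iterated commutators).
-/

open Subgroup
open scoped commutatorElement Pointwise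

section

variable {G : Type*} [Group G]

theorem top_lowerCentralSeries_eq_bot_iff_le_ker {G' : Type*} [Group G'] {f : G →* G'}
    (hf : Function.Surjective f) {c : ℕ} :
    (⊤ : Subgroup G').lowerCentralSeries c = ⊥ ↔
      (⊤ : Subgroup G).lowerCentralSeries c ≤ f.ker := by
  rw [← map_top_of_surjective f hf, ← map_lowerCentralSeries, Subgroup.map_eq_bot_iff]

theorem commutatorElement_mul_central {h₁ h₂ z₁ z₂ : G} (hz₁ : z₁ ∈ center G)
    (hz₂ : z₂ ∈ center G) : ⁅h₁ * z₁, h₂ * z₂⁆ = ⁅h₁, h₂⁆ := by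
  have hconj {z : G} (hz : z ∈ center G) (g : G) : z * g * z⁻¹ = g := by
    rw [← mem_center_iff.mp hz g, mul_inv_cancel_right]
  calc ⁅h₁ * z₁, h₂ * z₂⁆ = h₁ * (z₁ * (h₂ * z₂) * z₁⁻¹) * h₁⁻¹ * z₂⁻¹ * h₂⁻¹ := by group
    _ = h₁ * h₂ * (z₂ * h₁⁻¹ * z₂⁻¹) * h₂⁻¹ := by rw [hconj hz₁]; group
    _ = ⁅h₁, h₂⁆ := by rw [hconj hz₂]; group

theorem commutator_le_of_sup_center_eq_top {H : Subgroup G} (h : H ⊔ center G = ⊤) :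
    commutator G ≤ H := by
  rw [commutator_def, commutator_le]
  intro a _ b _
  have hmem (g : G) : g ∈ (H : Set G) * (center G : Set G) := by simp [← mul_normal, h]
  obtain ⟨h₁, hh₁, z₁, hz₁, rfl⟩ := hmem a
  obtain ⟨h₂, hh₂, z₂, hz₂, rfl⟩ := hmem b
  rw [commutatorElement_mul_central hz₁ hz₂]
  exact mul_mem (mul_mem (mul_mem hh₁ hh₂) (inv_mem hh₁)) (inv_mem hh₂)

theorem eq_top_of_sup_commutator_eq_top [Group.IsNilpotent G] {H : Subgroup G}
    (h : H ⊔ commutator G = ⊤) : H = ⊤ := by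
  refine Group.nilpotent_center_quotient_ind
    (P := fun G _ _ => ∀ H : Subgroup G, H ⊔ commutator G = ⊤ → H = ⊤) G
    (fun G _ _ H _ => Subsingleton.elim _ _) (fun G _ _ ih H h => ?_) H h
  let π := QuotientGroup.mk' (center G)
  have hπ : Function.Surjective π := QuotientGroup.mk'_surjective _
  have hmap : H.map π ⊔ commutator (G ⧸ center G) = ⊤ := by
    rw [← map_top_of_surjective π hπ, ← h, Subgroup.map_sup, commutator_def, commutator_def,
      map_commutator, map_top_of_surjective π hπ]
  have hZ : H ⊔ center G = ⊤ := by
    simpa [π, sup_comm] using congrArg (comap π) (ih _ hmap)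
  rw [eq_top_iff, ← h]
  exact sup_le le_rfl (commutator_le_of_sup_center_eq_top hZ)

theorem closure_eq_top_of_normalClosure_eq_top [Group.IsNilpotent G] {s : Set G}
    (h : normalClosure s = ⊤) : closure s = ⊤ := by
  have : (closure s ⊔ commutator G).Normal := .of_commutator_le _ le_sup_right
  refine eq_top_of_sup_commutator_eq_top (eq_top_iff.mpr ?_)
  exact h ▸ normalClosure_le_normal fun a ha => mem_sup_left (subset_closure ha)

theorem isMulCommutative_normalClosure_singleton {a : G}
    (h : ∀ g : G, Commute a (g * a * g⁻¹)) : IsMulCommutative (normalClosure {a}) := by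
  refine isMulCommutative_closure fun b hb c hc => ?_
  simp only [Group.mem_conjugatesOfSet_iff, Set.mem_singleton_iff, exists_eq_left,
    isConj_iff] at hb hc
  obtain ⟨g, rfl⟩ := hb
  obtain ⟨k, rfl⟩ := hc
  simpa [mul_assoc] using ((Commute.conj_iff g).mpr (h (g⁻¹ * k))).eq

theorem top_lowerCentralSeries_eq_bot_of_iSup_eq_top {n : ℕ} (N : Fin n → Subgroup G)
    [∀ i, (N i).Normal] [∀ i, IsMulCommutative (N i)] (hN : ⨆ i, N i = ⊤) :
    (⊤ : Subgroup G).lowerCentralSeries n = ⊥ := by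
  induction n generalizing G with
  | zero => rw [Subgroup.lowerCentralSeries_zero, ← hN, iSup_of_empty]
  | succ n ih =>
    have hle (j : Fin (n + 1)) : (⊤ : Subgroup G).lowerCentralSeries n ≤ N j := by
      let π := QuotientGroup.mk' (N j)
      have hπ : Function.Surjective π := QuotientGroup.mk'_surjective _
      let M (i : Fin n) : Subgroup (G ⧸ N j) := (N (j.succAbove i)).map π
      have : ∀ i, (M i).Normal := fun i => Normal.map inferInstance π hπ
      have hM : ⨆ i, M i = ⊤ := by
        rw [eq_top_iff, ← map_top_of_surjective π hπ, ← hN, Subgroup.map_iSup]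
        refine iSup_le fun k => ?_
        rcases eq_or_ne k j with rfl | hkj
        · simp [π]
        · obtain ⟨i, rfl⟩ := Fin.exists_succAbove_eq hkj
          exact le_iSup M i
      exact QuotientGroup.ker_mk' (N j) ▸
        (top_lowerCentralSeries_eq_bot_iff_le_ker hπ).mp (ih M hM)
    have hcent : ⨆ j, N j ≤ centralizer ((⊤ : Subgroup G).lowerCentralSeries n) :=
      iSup_le fun j => le_centralizer_iff.mp
        ((hle j).trans (le_centralizer_iff_isMulCommutative.mpr inferInstance))
    rw [hN] at hcent
    rw [Subgroup.lowerCentralSeries_succ, commutator_eq_bot_iff_le_centralizer, le_centralizer_iff]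
    exact hcent

/-- The left-normed commutators `⁅⁅⁅x₀, x₁⁆, …⁆, xₖ⁆` of weight `k + 1` in elements of `X`. -/
def iteratedCommutators (X : Set G) : ℕ → Set G
  | 0 => X
  | k + 1 => Set.image2 (fun w x => ⁅w, x⁆) (iteratedCommutators X k) X

theorem Set.Finite.iteratedCommutators {X : Set G} (hX : X.Finite) (k : ℕ) :
    (iteratedCommutators X k).Finite := by
  induction k with
  | zero => exact hX
  | succ k ih => exact ih.image2 _ hX

theorem iteratedCommutators_subset_lowerCentralSeries (X : Set G) (k : ℕ) :
    iteratedCommutators X k ⊆ (⊤ : Subgroup G).lowerCentralSeries k := by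
  induction k with
  | zero => exact fun x _ => mem_top x
  | succ k ih =>
    rintro _ ⟨w, hw, x, -, rfl⟩
    exact commutator_mem_commutator (ih hw) (mem_top x)

theorem mem_center_of_commute_of_closure_eq_top {X : Set G} (hX : closure X = ⊤) {a : G}
    (h : ∀ x ∈ X, Commute a x) : a ∈ center G := by
  have hle : closure X ≤ centralizer {a} :=
    (closure_le _).mpr fun x hx => mem_centralizer_singleton_iff.mpr (h x hx).symm.eq
  exact mem_center_iff.mpr fun g => mem_centralizer_singleton_iff.mp (hle (hX ▸ mem_top g))

theorem lowerCentralSeries_eq_normalClosure_iteratedCommutators {X : Set G}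
    (hX : closure X = ⊤) (k : ℕ) :
    (⊤ : Subgroup G).lowerCentralSeries k = normalClosure (iteratedCommutators X k) := by
  refine le_antisymm ?_
    (normalClosure_le_normal (iteratedCommutators_subset_lowerCentralSeries X k))
  induction k with
  | zero => exact hX ▸ closure_le_normalClosure
  | succ k ih =>
    set C := normalClosure (iteratedCommutators X (k + 1))
    have hcent : normalClosure (iteratedCommutators X k) ≤ C.upperCentralSeriesStep := by
      rw [C.upperCentralSeriesStep_eq_comap_center]
      refine normalClosure_le_normal fun w hw => mem_comap.mpr ?_
      let π := QuotientGroup.mk' C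
      have hπ : Function.Surjective π := QuotientGroup.mk'_surjective C
      refine mem_center_of_commute_of_closure_eq_top (X := π '' X)
        (by rw [← MonoidHom.map_closure, hX, map_top_of_surjective π hπ]) ?_
      rintro _ ⟨x, hx, rfl⟩
      rw [← commutatorElement_eq_one_iff_commute, ← map_commutatorElement, ← MonoidHom.mem_ker,
        QuotientGroup.ker_mk']
      exact subset_normalClosure ⟨w, hw, x, hx, rfl⟩
    rw [Subgroup.lowerCentralSeries_succ, commutator_le]
    exact fun a ha b _ => hcent (ih ha) b

theorem isFinitelyNormallyGenerated_lowerCentralSeries [Group.FG G] (k : ℕ) :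
    ((⊤ : Subgroup G).lowerCentralSeries k).IsFinitelyNormallyGenerated := by
  obtain ⟨X, hX, hXfin⟩ := Group.fg_iff.mp ‹_›
  exact ⟨_, hXfin.iteratedCommutators k,
    (lowerCentralSeries_eq_normalClosure_iteratedCommutators hX k).symm⟩

theorem Subgroup.fg_of_fg_map_of_fg_inf_ker {G' : Type*} [Group G'] (f : G →* G')
    {H : Subgroup G} (hmap : (H.map f).FG) (hker : (H ⊓ f.ker).FG) : H.FG := by
  obtain ⟨S', hS', hS'fin⟩ := (fg_iff _).mp hmap
  obtain ⟨S, hSH, hSfin, rfl⟩ :=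
    hS'fin.exists_subset_finite_image_eq (s := (H : Set G)) (f := f)
      (by rw [← coe_map, ← hS']; exact subset_closure)
  have hSH : closure S ≤ H := (closure_le _).mpr hSH
  suffices H = closure S ⊔ (H ⊓ f.ker) from this ▸ ((fg_iff _).mpr ⟨S, rfl, hSfin⟩).sup hker
  refine le_antisymm (fun h hh => ?_) (sup_le hSH inf_le_left)
  obtain ⟨t, ht, hft⟩ : f h ∈ (closure S).map f := by
    rw [MonoidHom.map_closure, hS']
    exact ⟨h, hh, rfl⟩
  have hker : t⁻¹ * h ∈ H ⊓ f.ker := mem_inf.mpr ⟨mul_mem (inv_mem (hSH ht)) hh, by simp [hft]⟩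
  simpa using mul_mem (mem_sup_left ht) (mem_sup_right hker)

open scoped IsMulCommutative in
theorem Subgroup.FG.of_le_of_isMulCommutative {A B : Subgroup G} [IsMulCommutative A]
    (hA : A.FG) (hBA : B ≤ A) : B.FG := by
  have : Group.FG A := (Group.fg_iff_subgroup_fg A).mpr hA
  have : Module.Finite ℤ (Additive A) := Module.Finite.iff_addGroup_fg.mpr inferInstance
  have : IsNoetherian ℤ (Additive A) := isNoetherian_of_isNoetherianRing_of_finite ℤ _
  obtain ⟨S, hS⟩ : (B.subgroupOf A).FG := by
    rw [fg_iff_add_fg, ← AddSubgroup.toIntSubmodule_toAddSubgroup (B.subgroupOf A).toAddSubgroup,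
      ← Submodule.fg_iff_addSubgroup_fg]
    exact IsNoetherian.noetherian _
  refine (fg_iff _).mpr ⟨A.subtype '' S, ?_, S.finite_toSet.image _⟩
  rw [← MonoidHom.map_closure, hS, subgroupOf_map_subtype, inf_eq_left.mpr hBA]

theorem normalClosure_eq_closure_of_subset_center {s : Set G} (h : s ⊆ center G) :
    normalClosure s = closure s := by
  refine le_antisymm (closure_mono fun x hx => ?_) closure_le_normalClosure
  obtain ⟨a, ha, hax⟩ := Group.mem_conjugatesOfSet_iff.mp hx
  exact hax.eq_of_left_mem_center (h ha) ▸ ha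

theorem Subgroup.fg_of_top_lowerCentralSeries_eq_bot [Group.FG G] {c : ℕ}
    (hc : (⊤ : Subgroup G).lowerCentralSeries c = ⊥) (H : Subgroup G) : H.FG := by
  induction c generalizing G with
  | zero => exact (eq_bot_iff.mpr (hc ▸ le_top) : H = ⊥) ▸ FG.bot
  | succ c ih =>
    set L := (⊤ : Subgroup G).lowerCentralSeries c
    have hLZ : L ≤ center G := commutator_top_right_eq_bot_iff_le_center.mp hc
    have : IsMulCommutative L :=
      le_centralizer_iff_isMulCommutative.mp (hLZ.trans (center_le_centralizer _))
    have hLfg : L.FG := by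
      obtain ⟨X, hX, hXfin⟩ := Group.fg_iff.mp ‹_›
      have hL : L = closure (iteratedCommutators X c) :=
        (lowerCentralSeries_eq_normalClosure_iteratedCommutators hX c).trans
          (normalClosure_eq_closure_of_subset_center
            ((iteratedCommutators_subset_lowerCentralSeries X c).trans hLZ))
      exact (fg_iff _).mpr ⟨_, hL.symm, hXfin.iteratedCommutators c⟩
    let π := QuotientGroup.mk' L
    have hπ : Function.Surjective π := QuotientGroup.mk'_surjective L
    have hbot : (⊤ : Subgroup (G ⧸ L)).lowerCentralSeries c = ⊥ :=
      (top_lowerCentralSeries_eq_bot_iff_le_ker hπ).mpr (QuotientGroup.ker_mk' L).ge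
    refine fg_of_fg_map_of_fg_inf_ker π (ih hbot _) (hLfg.of_le_of_isMulCommutative ?_)
    exact inf_le_right.trans (QuotientGroup.ker_mk' L).le

theorem Group.IsFinitelyPresented.of_top_lowerCentralSeries_eq_bot [Group.FG G] {c : ℕ}
    (hc : (⊤ : Subgroup G).lowerCentralSeries c = ⊥) : Group.IsFinitelyPresented G := by
  obtain ⟨α, _, φ, hφ⟩ := Group.fg_iff_exists_freeGroup_hom_surjective_finite.mp ‹_›
  let N := (⊤ : Subgroup (FreeGroup α)).lowerCentralSeries c
  have hN : N ≤ φ.ker := (top_lowerCentralSeries_eq_bot_iff_le_ker hφ).mp hc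
  have hbot : (⊤ : Subgroup (FreeGroup α ⧸ N)).lowerCentralSeries c = ⊥ :=
    (top_lowerCentralSeries_eq_bot_iff_le_ker (QuotientGroup.mk'_surjective N)).mpr
      (QuotientGroup.ker_mk' N).ge
  have : Group.IsFinitelyPresented (FreeGroup α ⧸ N) :=
    quotient N (isFinitelyNormallyGenerated_lowerCentralSeries c)
  let ψ := QuotientGroup.lift N φ hN
  have : Group.FG ψ.ker :=
    (Group.fg_iff_subgroup_fg _).mpr (fg_of_top_lowerCentralSeries_eq_bot hbot _)
  exact of_surjective ψ (QuotientGroup.lift_surjective_of_surjective N φ hφ hN) (.of_FG _)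

theorem Group.IsFinitelyPresented.to_isFinitelyPresented [Group.IsFinitelyPresented G] :
    _root_.IsFinitelyPresented G := by
  obtain ⟨n, s, hs, ⟨e⟩⟩ := exists_mulEquiv_presentedGroup (G := G)
  exact ⟨n, hs.toFinset, ⟨e.trans (QuotientGroup.quotientMulEquivOfEq (by rw [hs.coe_toFinset]))⟩⟩

end

namespace milnorRelators

variable {G : Type*} [Group G] {n : ℕ} (x : Fin n → G)

theorem commute_mk_conj (i : Fin n) (g : G ⧸ milnorRelators x) :
    Commute (x i : G ⧸ milnorRelators x) (g * x i * g⁻¹) := by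
  induction g using QuotientGroup.induction_on with
  | H y =>
    have hrel : (x i)⁻¹ * (y * x i * y⁻¹)⁻¹ * x i * (y * x i * y⁻¹) ∈ milnorRelators x :=
      subset_normalClosure ⟨i, y⁻¹, by simp⟩
    rw [← QuotientGroup.eq_one_iff] at hrel
    refine Commute.inv_inv_iff.mp (commutatorElement_eq_one_iff_commute.mp ?_)
    simpa [commutatorElement_def] using hrel

theorem normalClosure_range_mk_eq_top (hgen : normalClosure (Set.range x) = ⊤) :
    normalClosure (Set.range fun i => (x i : G ⧸ milnorRelators x)) = ⊤ := by
  have hπ := QuotientGroup.mk'_surjective (milnorRelators x)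
  rw [← map_top_of_surjective _ hπ, ← hgen, map_normalClosure _ _ hπ, ← Set.range_comp]
  rfl

theorem top_lowerCentralSeries_eq_bot (hgen : normalClosure (Set.range x) = ⊤) :
    (⊤ : Subgroup (G ⧸ milnorRelators x)).lowerCentralSeries n = ⊥ := by
  let N (i : Fin n) := normalClosure {(x i : G ⧸ milnorRelators x)}
  have (i : Fin n) : IsMulCommutative (N i) :=
    isMulCommutative_normalClosure_singleton (commute_mk_conj x i)
  refine top_lowerCentralSeries_eq_bot_of_iSup_eq_top N (eq_top_iff.mpr ?_)
  rw [← normalClosure_range_mk_eq_top x hgen]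
  refine normalClosure_le_normal ?_
  rintro _ ⟨i, rfl⟩
  exact mem_iSup_of_mem i (subset_normalClosure rfl)

end milnorRelators

/-- If `G` is normally generated by `x₁, …, xₙ`, then the Milnor group `MG` is a
nilpotent group generated by the images of the `xᵢ`, and it is finitely presented. -/
theorem milnorGroup_isFinitelyPresented {G : Type*} [Group G] {n : ℕ} (x : Fin n → G)
    (hgen : Subgroup.normalClosure (Set.range x) = ⊤) :
    Subgroup.closure
        (Set.range fun i => (QuotientGroup.mk (x i) : G ⧸ milnorRelators x)) = ⊤ ∧
    Group.IsNilpotent (G ⧸ milnorRelators x) ∧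
    IsFinitelyPresented (G ⧸ milnorRelators x) := by
  have hbot := milnorRelators.top_lowerCentralSeries_eq_bot x hgen
  have hnil : Group.IsNilpotent (G ⧸ milnorRelators x) :=
    Subgroup.nilpotent_iff_lowerCentralSeries.mpr ⟨n, hbot⟩
  have hgen' := closure_eq_top_of_normalClosure_eq_top
    (milnorRelators.normalClosure_range_mk_eq_top x hgen)
  have : Group.FG (G ⧸ milnorRelators x) := Group.fg_iff.mpr ⟨_, hgen', Set.finite_range _⟩
  have := Group.IsFinitelyPresented.of_top_lowerCentralSeries_eq_bot hbot
  exact ⟨hgen', hnil, Group.IsFinitelyPresented.to_isFinitelyPresented⟩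
end

section
/- Let G be a group normally generated by x_1, ..., x_n with Milnor group MG, and let A be the intersection over i of the normal closures A_i of the x_i in MG. Then A is contained in the center of MG. -/
/-! The relators say that the image of each `x i` commutes with all of its conjugates, so its
normal closure is abelian. An element lying in every one of these normal closures therefore
commutes with every conjugate of every `x i`, and these conjugates generate the quotient since
the `x i` normally generate `G`. -/

open Subgroup

section NormalClosure

variable {H : Type*} [Group H]

theorem commute_conj_conj_of_forall_commute_conj {g : H} (hg : ∀ c : H, Commute g (c * g * c⁻¹))
    (c d : H) : Commute (c * g * c⁻¹) (d * g * d⁻¹) := by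
  have h := (hg (c⁻¹ * d)).map (MulAut.conj c).toMonoidHom
  simpa [mul_assoc] using h

theorem isMulCommutative_normalClosure_singleton_s10 {g : H}
    (hg : ∀ c : H, Commute g (c * g * c⁻¹)) :
    IsMulCommutative (normalClosure ({g} : Set H)) := by
  refine isMulCommutative_closure fun a ha b hb => ?_
  obtain ⟨_, rfl, hga⟩ := Group.mem_conjugatesOfSet_iff.mp ha
  obtain ⟨_, rfl, hgb⟩ := Group.mem_conjugatesOfSet_iff.mp hb
  obtain ⟨c, rfl⟩ := isConj_iff.mp hga
  obtain ⟨d, rfl⟩ := isConj_iff.mp hgb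
  exact commute_conj_conj_of_forall_commute_conj hg c d

theorem iInf_normalClosure_le_center {ι : Type*} {g : ι → H}
    (hgen : normalClosure (Set.range g) = ⊤)
    (hcomm : ∀ i, IsMulCommutative (normalClosure ({g i} : Set H))) :
    (⨅ i, normalClosure ({g i} : Set H)) ≤ center H := by
  intro a ha
  suffices normalClosure (Set.range g) ≤ centralizer {a} by
    rw [hgen] at this
    exact mem_center_iff.mpr fun b => mem_centralizer_singleton_iff.mp (this (mem_top b))
  refine closure_le _ |>.mpr fun c hc => ?_
  obtain ⟨_, ⟨i, rfl⟩, hc⟩ := Group.mem_conjugatesOfSet_iff.mp hc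
  have hci : c ∈ normalClosure ({g i} : Set H) :=
    conjugatesOfSet_subset_normalClosure (Group.mem_conjugatesOfSet_iff.mpr ⟨g i, rfl, hc⟩)
  exact mem_centralizer_singleton_iff.mpr (setLike_mul_comm hci (mem_iInf.mp ha i))

end NormalClosure

open scoped commutatorElement in
theorem commute_mk_conj_milnorRelators {G : Type*} [Group G] {n : ℕ} (x : Fin n → G) (i : Fin n)
    (c : G ⧸ milnorRelators x) : Commute (↑(x i) : G ⧸ milnorRelators x) (c * ↑(x i) * c⁻¹) := by
  obtain ⟨y, rfl⟩ := QuotientGroup.mk_surjective c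
  have hrel : ⁅(x i)⁻¹, (y * x i * y⁻¹)⁻¹⁆ ∈ milnorRelators x := by
    refine subset_normalClosure ⟨i, y⁻¹, ?_⟩
    group
  have h : ⁅(↑(x i) : G ⧸ milnorRelators x)⁻¹,
      ((y : G ⧸ milnorRelators x) * ↑(x i) * (↑y)⁻¹)⁻¹⁆ = 1 :=
    (QuotientGroup.eq_one_iff _).mpr hrel
  simpa using (commutatorElement_eq_one_iff_commute.mp h).inv_inv

/-- Let `G` be normally generated by `x₁, …, xₙ` with Milnor group `MG`, and let `A` be
the intersection of the normal closures `Aᵢ` of the images of the `xᵢ` in `MG`. Then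
`A` is contained in the center of `MG`. -/
theorem milnorGroup_inf_normalClosures_central {G : Type*} [Group G] {n : ℕ}
    (x : Fin n → G) (hgen : Subgroup.normalClosure (Set.range x) = ⊤) :
    (⨅ i : Fin n, Subgroup.normalClosure
        ({QuotientGroup.mk (x i)} : Set (G ⧸ milnorRelators x))) ≤
      Subgroup.center (G ⧸ milnorRelators x) := by
  have hgen' : normalClosure (Set.range fun i => (x i : G ⧸ milnorRelators x)) = ⊤ := by
    have hsurj := QuotientGroup.mk'_surjective (milnorRelators x)
    have := map_normalClosure (Set.range x) _ hsurj
    rwa [hgen, map_top_of_surjective _ hsurj, eq_comm, ← Set.range_comp] at this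
  exact iInf_normalClosure_le_center hgen' fun i =>
    isMulCommutative_normalClosure_singleton_s10 (commute_mk_conj_milnorRelators x i)
end

section
/- Let G be a group in which the elements [x_i, x_i^y] are trivial for normal generators x_1,...,x_n and all y (i.e., G is its own Milnor group). If g ∈ G_n (the n-th term of the lower central series) then g lies in the normal closure of x_i for every i. -/
/-!
Each `x i` commutes with all its conjugates, so its normal closure `Aᵢ` is abelian. Killing
`x i` leaves a group of the same kind on the remaining `n - 1` generators, which by induction is
nilpotent of class `≤ n - 1`; hence `G_n ≤ Aᵢ` for every `i`. An element of `G_n` then commutes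
with every conjugate of every `x j` (all of them lie in the abelian `Aⱼ`), so it is central and
`G_{n+1} = 1`, which is what drives the induction.
-/

open Subgroup

section

variable {G H ι : Type*} [Group G] [Group H]

def HasMilnorRelations (x : ι → G) : Prop :=
  ∀ i (y : G), Commute (x i) (y⁻¹ * x i * y)

theorem hasMilnorRelations_iff (x : ι → G) :
    HasMilnorRelations x ↔
      ∀ i (y : G), (x i)⁻¹ * (y⁻¹ * x i * y)⁻¹ * x i * (y⁻¹ * x i * y) = 1 := by
  refine forall₂_congr fun i y => ?_
  rw [← Commute.inv_inv_iff, ← commutatorElement_eq_one_iff_commute, commutatorElement_def,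
    inv_inv, inv_inv]

theorem HasMilnorRelations.map {x : ι → G} (hx : HasMilnorRelations x) (f : G →* H)
    (hf : Function.Surjective f) : HasMilnorRelations (f ∘ x) := by
  intro i y
  obtain ⟨y, rfl⟩ := hf y
  simpa using (hx i y).map f

theorem isMulCommutative_normalClosure_singleton_s14 {t : G}
    (ht : ∀ y : G, Commute t (y⁻¹ * t * y)) : IsMulCommutative (normalClosure ({t} : Set G)) := by
  refine isMulCommutative_closure fun a ha b hb => ?_
  obtain ⟨_, rfl, hta⟩ := Group.mem_conjugatesOfSet_iff.mp ha
  obtain ⟨_, rfl, htb⟩ := Group.mem_conjugatesOfSet_iff.mp hb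
  obtain ⟨u, rfl⟩ := isConj_iff.mp hta
  obtain ⟨v, rfl⟩ := isConj_iff.mp htb
  -- conjugation by `u` maps `t`, `(v⁻¹ * u)⁻¹ * t * (v⁻¹ * u)` to `u * t * u⁻¹`, `v * t * v⁻¹`
  have := (ht (v⁻¹ * u)).map (MulAut.conj u).toMonoidHom
  simp only [MulEquiv.coe_toMonoidHom, MulAut.conj_apply] at this
  convert this.eq using 2 <;> group

theorem le_center_of_forall_le_normalClosure {x : ι → G}
    (hgen : normalClosure (Set.range x) = ⊤) (hx : HasMilnorRelations x) {K : Subgroup G}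
    (hK : ∀ i, K ≤ normalClosure {x i}) : K ≤ center G := by
  rw [← centralizer_univ, ← coe_top, ← le_centralizer_iff, ← hgen, normalClosure, closure_le]
  intro c hc
  obtain ⟨_, ⟨j, rfl⟩, hc⟩ := Group.mem_conjugatesOfSet_iff.mp hc
  have hcA : c ∈ normalClosure {x j} :=
    conjugatesOfSet_subset_normalClosure (Group.mem_conjugatesOfSet_iff.mpr ⟨x j, rfl, hc⟩)
  have := le_centralizer_iff_isMulCommutative.mpr (isMulCommutative_normalClosure_singleton_s14 (hx j))
  exact centralizer_le (hK j) (this hcA)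

theorem lowerCentralSeries_le_ker (f : G →* H) {n : ℕ}
    (h : (⊤ : Subgroup H).lowerCentralSeries n = ⊥) :
    (⊤ : Subgroup G).lowerCentralSeries n ≤ f.ker := by
  rw [← MonoidHom.comap_bot, ← map_le_iff_le_comap, map_lowerCentralSeries, ← h]
  exact lowerCentralSeries_mono n le_top

theorem normalClosure_range_comp_succAbove_eq_top {n : ℕ} {x : Fin (n + 1) → G}
    (hgen : normalClosure (Set.range x) = ⊤) {i : Fin (n + 1)} (hi : x i = 1) :
    normalClosure (Set.range (x ∘ i.succAbove)) = ⊤ := by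
  refine top_le_iff.mp (hgen ▸ normalClosure_le_normal ?_)
  rintro _ ⟨j, rfl⟩
  rcases i.eq_self_or_eq_succAbove j with rfl | ⟨k, rfl⟩
  · exact hi ▸ one_mem _
  · exact subset_normalClosure ⟨k, rfl⟩

theorem lowerCentralSeries_le_normalClosure_of_quotient {n : ℕ} {x : Fin (n + 1) → G}
    (hgen : normalClosure (Set.range x) = ⊤) (hx : HasMilnorRelations x) (i : Fin (n + 1))
    (hquot : ∀ z : Fin n → G ⧸ normalClosure {x i}, normalClosure (Set.range z) = ⊤ →
      HasMilnorRelations z → (⊤ : Subgroup (G ⧸ normalClosure {x i})).lowerCentralSeries n = ⊥) :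
    (⊤ : Subgroup G).lowerCentralSeries n ≤ normalClosure {x i} := by
  set π := QuotientGroup.mk' (normalClosure {x i})
  have hπ : Function.Surjective π := QuotientGroup.mk'_surjective _
  have hgen' : normalClosure (Set.range (π ∘ x)) = ⊤ := by
    rw [Set.range_comp, ← map_normalClosure _ _ hπ, hgen, map_top_of_surjective _ hπ]
  have hxi : π (x i) = 1 := (QuotientGroup.eq_one_iff _).mpr (subset_normalClosure rfl)
  have hnil := hquot (π ∘ x ∘ i.succAbove) (normalClosure_range_comp_succAbove_eq_top hgen' hxi)
    fun j => hx.map π hπ (i.succAbove j)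
  simpa only [π, QuotientGroup.ker_mk'] using lowerCentralSeries_le_ker π hnil

theorem lowerCentralSeries_eq_bot_of_hasMilnorRelations {n : ℕ} (x : Fin n → G)
    (hgen : normalClosure (Set.range x) = ⊤) (hx : HasMilnorRelations x) :
    (⊤ : Subgroup G).lowerCentralSeries n = ⊥ := by
  induction n generalizing G with
  | zero =>
    rw [Set.range_eq_empty, normalClosure_empty] at hgen
    rw [Subgroup.lowerCentralSeries_zero, hgen]
  | succ n ih =>
    exact Subgroup.lowerCentralSeries_succ_eq_bot _ <| le_center_of_forall_le_normalClosure hgen hx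
      fun i => lowerCentralSeries_le_normalClosure_of_quotient hgen hx i ih

end

/-- Let `G` be normally generated by `x₁, …, xₙ` in which all the Milnor relations
`[xᵢ, xᵢ^y] = 1` hold (i.e. `G` is its own Milnor group). Then every element of the
`n`-th term `G_n` of the lower central series (paper indexing `G₁ = G`; here
`lowerCentralSeries G (n-1)`) lies in the normal closure of each `xᵢ`. -/
theorem milnor_inductive_step {G : Type*} [Group G] {n : ℕ} (x : Fin n → G)
    (hgen : Subgroup.normalClosure (Set.range x) = ⊤)
    (hrel : ∀ (i : Fin n) (y : G),
      (x i)⁻¹ * (y⁻¹ * x i * y)⁻¹ * x i * (y⁻¹ * x i * y) = 1) :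
    ∀ g ∈ (⊤ : Subgroup G).lowerCentralSeries (n - 1), ∀ i : Fin n,
      g ∈ Subgroup.normalClosure {x i} := by
  intro g hg i
  rcases n with _ | m
  · exact i.elim0
  · have hx : HasMilnorRelations x := (hasMilnorRelations_iff x).mpr hrel
    exact lowerCentralSeries_le_normalClosure_of_quotient hgen hx i
      lowerCentralSeries_eq_bot_of_hasMilnorRelations hg
end

section
/- A central extension of a finitely presented group by a finitely generated abelian group is finitely presented: if 1 → A → G → Q → 1 is exact with A central in G, A finitely generated, and Q finitely presented, then G is finitely presented. -/
/-!
Since `A` is central it is abelian, so `G` is an extension of the finitely presented group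
`G ⧸ A` by a finitely generated abelian group, and it suffices to show (P. Hall) that an
extension `1 → N → G → Q → 1` of finitely presented groups is finitely presented, and that
finitely generated abelian groups are finitely presented.

For the first, take generators `X` of `N` and lifts `Y` of generators of `Q`. Every relator of
`Q`, read in the letters `Y`, and every conjugate of a letter of `X` by a letter or its inverse
lies in `N`, so it equals a word in `X`; these finitely many equations, together with the
relators of `N`, present `G`. Indeed, in the group `P` they present, the subgroup generated by
`X` is normal, `P` modulo it is a quotient of `Q`, and on it the map to `G` is injective
because the relators of `N` hold there.

For the second, induct on the number of generators: a cyclic group is finite or infinite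
cyclic, hence finitely presented, and quotienting by the cyclic subgroup generated by one
generator leaves an abelian group with one generator fewer.
-/

open Function Set

theorem isFinitelyPresented_iff_group_isFinitelyPresented {G : Type*} [Group G] :
    IsFinitelyPresented G ↔ Group.IsFinitelyPresented G := by
  constructor
  · rintro ⟨m, S, ⟨e⟩⟩
    exact .equiv (G := PresentedGroup (S : Set (FreeGroup (Fin m)))) e.symm
  · intro h
    obtain ⟨m, S, hS, ⟨e⟩⟩ := h.exists_mulEquiv_presentedGroup
    exact ⟨m, hS.toFinset,
      ⟨e.trans (QuotientGroup.quotientMulEquivOfEq (by rw [hS.coe_toFinset]))⟩⟩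

theorem Subgroup.closure_normal_of_conj_mem {P : Type*} [Group P] {S T : Set P}
    (hS : closure S = ⊤)
    (hT : ∀ s ∈ S, ∀ t ∈ T, s * t * s⁻¹ ∈ closure T ∧ s⁻¹ * t * s ∈ closure T) :
    (closure T).Normal := by
  have conj_mem {g : P} (hg : ∀ t ∈ T, g * t * g⁻¹ ∈ closure T) {k : P} (hk : k ∈ closure T) :
      g * k * g⁻¹ ∈ closure T :=
    (closure_le ((closure T).comap (MulAut.conj g).toMonoidHom)).2 hg hk
  rw [← normalizer_eq_top_iff, eq_top_iff, ← hS, closure_le]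
  refine fun s hs k => ⟨conj_mem fun t ht => (hT s hs t ht).1, fun hk => ?_⟩
  simpa [mul_assoc] using conj_mem (g := s⁻¹) (by simpa using fun t ht => (hT s hs t ht).2) hk

def FreeGroup.eraseLeft {X Y : Type*} : FreeGroup (X ⊕ Y) →* FreeGroup Y :=
  FreeGroup.lift (Sum.elim 1 .of)

theorem FreeGroup.eraseLeft_map_inr {X Y : Type*} (w : FreeGroup Y) :
    eraseLeft (FreeGroup.map (Sum.inr : Y → X ⊕ Y) w) = w := by
  simpa using DFunLike.congr_fun
    (FreeGroup.ext_hom (eraseLeft.comp (FreeGroup.map Sum.inr)) (.id _) fun _ => rfl) w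

namespace Group.IsFinitelyPresented

open FreeGroup (eraseLeft eraseLeft_map_inr)

instance of_isCyclic (C : Type*) [Group C] [IsCyclic C] : Group.IsFinitelyPresented C := by
  cases finite_or_infinite C
  · infer_instance
  · exact .equiv intCyclicMulEquiv

noncomputable def wordOf {G X : Type*} [Group G] {N : Subgroup G} (α : FreeGroup X →* N) :
    G → FreeGroup X :=
  invFun fun u => (α u : G)

theorem apply_wordOf {G X : Type*} [Group G] {N : Subgroup G} {α : FreeGroup X →* N}
    (hα : Surjective α) {g : G} (hg : g ∈ N) : (α (wordOf α g) : G) = g :=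
  invFun_eq (f := fun u => (α u : G)) (by obtain ⟨u, hu⟩ := hα ⟨g, hg⟩; exact ⟨u, by simp [hu]⟩)

section Extension

variable {G : Type*} [Group G] {N : Subgroup G} [N.Normal] {X Y : Type*}
  (α : FreeGroup X →* N) (β : FreeGroup Y →* G ⧸ N)

noncomputable def extensionGenerators : X ⊕ Y → G :=
  Sum.elim (fun x => α (.of x)) (fun y => (β (.of y)).out)

local notation "φ" => FreeGroup.lift (extensionGenerators α β)

/-- The words that `φ` maps into `N`, and that `extensionRelators` equates with words in `X`. -/
def extensionRewritables (RQ : Set (FreeGroup Y)) : Set (FreeGroup (X ⊕ Y)) :=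
  FreeGroup.map Sum.inr '' RQ ∪
    image2 (fun d x => d * .of (.inl x) * d⁻¹) (range .of ∪ range fun t => (.of t)⁻¹) univ

noncomputable def extensionRelators (RN : Set (FreeGroup X)) (RQ : Set (FreeGroup Y)) :
    Set (FreeGroup (X ⊕ Y)) :=
  FreeGroup.map Sum.inl '' RN ∪
    (fun v => v * (FreeGroup.map Sum.inl (wordOf α (φ v)))⁻¹) '' extensionRewritables RQ

variable {α β}

theorem lift_extensionGenerators_map_inl (u : FreeGroup X) :
    φ (FreeGroup.map Sum.inl u) = α u :=
  DFunLike.congr_fun (FreeGroup.ext_hom ((φ).comp (FreeGroup.map Sum.inl)) (N.subtype.comp α)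
    fun _ => by simp [extensionGenerators]) u

theorem mk_lift_extensionGenerators (w : FreeGroup (X ⊕ Y)) :
    (φ w : G ⧸ N) = β (eraseLeft w) :=
  DFunLike.congr_fun (FreeGroup.ext_hom ((QuotientGroup.mk' N).comp φ) (β.comp eraseLeft)
    fun t => by cases t <;> simp [extensionGenerators, eraseLeft]) w

theorem lift_extensionGenerators_mem {RQ : Set (FreeGroup Y)} (hRQ : RQ ⊆ β.ker)
    {v : FreeGroup (X ⊕ Y)} (hv : v ∈ extensionRewritables RQ) : φ v ∈ N := by
  rcases hv with ⟨r, hr, rfl⟩ | ⟨d, -, x, -, rfl⟩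
  · rw [← QuotientGroup.eq_one_iff, mk_lift_extensionGenerators, eraseLeft_map_inr]
    exact hRQ hr
  · simpa [extensionGenerators] using Subgroup.Normal.conj_mem inferInstance _ (α (.of x)).2 (φ d)

variable {RN : Set (FreeGroup X)} {RQ : Set (FreeGroup Y)}

theorem extensionRelators_subset_ker (hα : Surjective α) (hRN : RN ⊆ α.ker)
    (hRQ : RQ ⊆ β.ker) : ∀ r ∈ extensionRelators α β RN RQ, φ r = 1 := by
  rintro _ (⟨r, hr, rfl⟩ | ⟨v, hv, rfl⟩)
  · simpa [lift_extensionGenerators_map_inl] using hRN hr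
  · rw [map_mul, map_inv, lift_extensionGenerators_map_inl,
      apply_wordOf hα (lift_extensionGenerators_mem hRQ hv), mul_inv_cancel]

variable (α β RN RQ) in
def extensionInl : FreeGroup X →* PresentedGroup (extensionRelators α β RN RQ) :=
  (PresentedGroup.mk _).comp (FreeGroup.map Sum.inl)

theorem mk_mem_range_extensionInl {v : FreeGroup (X ⊕ Y)} (hv : v ∈ extensionRewritables RQ) :
    PresentedGroup.mk _ v ∈ (extensionInl α β RN RQ).range :=
  ⟨wordOf α (φ v), (PresentedGroup.mk_eq_mk_of_mul_inv_mem (.inr ⟨v, hv, rfl⟩)).symm⟩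

theorem range_extensionInl_eq_closure : (extensionInl α β RN RQ).range =
    Subgroup.closure (range fun x => PresentedGroup.of (.inl x)) := by
  rw [← FreeGroup.range_lift_eq_closure]
  congr 1
  exact FreeGroup.ext_hom _ _ fun _ => rfl

theorem range_extensionInl_normal : (extensionInl α β RN RQ).range.Normal := by
  rw [range_extensionInl_eq_closure]
  refine Subgroup.closure_normal_of_conj_mem (PresentedGroup.closure_range_of _) ?_
  rintro _ ⟨t, rfl⟩ _ ⟨x, rfl⟩
  rw [← range_extensionInl_eq_closure]
  constructor
  · exact mk_mem_range_extensionInl (.inr ⟨_, .inl ⟨t, rfl⟩, x, trivial, rfl⟩)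
  · convert mk_mem_range_extensionInl (.inr ⟨_, .inr ⟨t, rfl⟩, x, trivial, rfl⟩) using 1
    simp only [map_mul, map_inv, inv_inv]
    rfl

theorem mk_mem_range_extensionInl_of_mem (hRQ : Subgroup.normalClosure RQ = β.ker)
    {w : FreeGroup (X ⊕ Y)} (hw : φ w ∈ N) :
    PresentedGroup.mk _ w ∈ (extensionInl α β RN RQ).range := by
  have := range_extensionInl_normal (α := α) (β := β) (RN := RN) (RQ := RQ)
  let π := QuotientGroup.mk' (extensionInl α β RN RQ).range
  -- modulo the letters of `X`, every word equals its `Y`-part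
  have hπ : π.comp (PresentedGroup.mk _) =
      π.comp ((PresentedGroup.mk _).comp ((FreeGroup.map Sum.inr).comp eraseLeft)) := by
    refine FreeGroup.ext_hom _ _ fun t => ?_
    rcases t with x | y
    · simpa [eraseLeft, π] using ⟨FreeGroup.of x, rfl⟩
    · rfl
  have hker : β.ker ≤ (π.comp ((PresentedGroup.mk _).comp (FreeGroup.map Sum.inr))).ker := by
    rw [← hRQ]
    exact Subgroup.normalClosure_le_normal fun r hr =>
      (QuotientGroup.eq_one_iff _).2 (mk_mem_range_extensionInl (.inl ⟨r, hr, rfl⟩))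
  have hβ : eraseLeft w ∈ β.ker := by
    rw [MonoidHom.mem_ker, ← mk_lift_extensionGenerators]
    exact (QuotientGroup.eq_one_iff _).2 hw
  rw [← QuotientGroup.eq_one_iff]
  exact (DFunLike.congr_fun hπ w).trans (hker hβ)

theorem ker_lift_extensionGenerators (hα : Surjective α)
    (hRN : Subgroup.normalClosure RN = α.ker) (hRQ : Subgroup.normalClosure RQ = β.ker) :
    (φ).ker = Subgroup.normalClosure (extensionRelators α β RN RQ) := by
  have hR := extensionRelators_subset_ker hα (hRN ▸ Subgroup.subset_normalClosure)
    (hRQ ▸ Subgroup.subset_normalClosure)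
  refine le_antisymm (fun w hw => ?_) (Subgroup.normalClosure_le_normal hR)
  obtain ⟨u, hu⟩ := mk_mem_range_extensionInl_of_mem hRQ (hw ▸ one_mem N)
  have hαu : α u = 1 := by
    have h := congrArg (PresentedGroup.toGroup hR) hu
    change φ (FreeGroup.map Sum.inl u) = φ w at h
    rw [lift_extensionGenerators_map_inl, hw] at h
    exact Subtype.ext h
  have hker : α.ker ≤ (extensionInl α β RN RQ).ker := by
    rw [← hRN]
    exact Subgroup.normalClosure_le_normal fun r hr =>
      PresentedGroup.one_of_mem (.inl ⟨r, hr, rfl⟩)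
  rw [← PresentedGroup.mk_eq_one_iff, ← hu]
  exact hker hαu

theorem lift_extensionGenerators_surjective (hα : Surjective α) (hβ : Surjective β) :
    Surjective φ := by
  intro g
  obtain ⟨v, hv⟩ := hβ g
  have hN : (φ (FreeGroup.map Sum.inr v))⁻¹ * g ∈ N := by
    rw [← QuotientGroup.eq, mk_lift_extensionGenerators, eraseLeft_map_inr, hv]
  obtain ⟨u, hu⟩ := hα ⟨_, hN⟩
  refine ⟨FreeGroup.map Sum.inr v * FreeGroup.map Sum.inl u, ?_⟩
  rw [map_mul, lift_extensionGenerators_map_inl, hu, mul_inv_cancel_left]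

theorem extensionRelators_finite [Finite X] [Finite Y] (hRN : RN.Finite) (hRQ : RQ.Finite) :
    (extensionRelators α β RN RQ).Finite :=
  (hRN.image _).union <| ((hRQ.image _).union <|
    ((finite_range _).union (finite_range _)).image2 _ finite_univ).image _

end Extension

theorem of_extension {G : Type*} [Group G] (N : Subgroup G) [N.Normal]
    [Group.IsFinitelyPresented N] [Group.IsFinitelyPresented (G ⧸ N)] :
    Group.IsFinitelyPresented G := by
  obtain ⟨n, α, hα, RN, hRNfin, hRN⟩ := ‹Group.IsFinitelyPresented N›
  obtain ⟨m, β, hβ, RQ, hRQfin, hRQ⟩ := ‹Group.IsFinitelyPresented (G ⧸ N)›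
  have := (extensionRelators_finite (α := α) (β := β) hRNfin hRQfin).to_subtype
  exact .equiv (G := PresentedGroup (extensionRelators α β RN RQ))
    ((QuotientGroup.quotientMulEquivOfEq (ker_lift_extensionGenerators hα hRN hRQ)).symm.trans
      (QuotientGroup.quotientKerEquivOfSurjective _ (lift_extensionGenerators_surjective hα hβ)))

theorem of_closure_range_eq_top {A : Type*} [CommGroup A] {n : ℕ} (a : Fin n → A)
    (ha : Subgroup.closure (range a) = ⊤) : Group.IsFinitelyPresented A := by
  induction n generalizing A with
  | zero =>
    rw [range_eq_empty, Subgroup.closure_empty] at ha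
    have := Subgroup.subsingleton_iff.1 (subsingleton_of_bot_eq_top ha)
    infer_instance
  | succ n ih =>
    let C := Subgroup.zpowers (a 0)
    have hrange : range a = insert (a 0) (range (Fin.tail a)) := by
      rw [← Fin.range_cons, Fin.cons_self_tail]
    have : Group.IsFinitelyPresented (A ⧸ C) := by
      refine ih (QuotientGroup.mk' C ∘ Fin.tail a) ?_
      rw [range_comp, ← MonoidHom.map_closure, ← Subgroup.map_top_of_surjective _
        (QuotientGroup.mk'_surjective C), ← ha, hrange, insert_eq, Subgroup.closure_union,
        ← Subgroup.zpowers_eq_closure, Subgroup.map_sup, QuotientGroup.map_mk'_self, bot_sup_eq]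
    exact of_extension C

instance of_fg {A : Type*} [CommGroup A] [Group.FG A] : Group.IsFinitelyPresented A := by
  obtain ⟨S, hS⟩ := Group.fg_def.1 ‹_›
  exact of_closure_range_eq_top (fun i => (S.equivFin.symm i : A)) <|
    (S.equivFin.symm.surjective.range_comp Subtype.val).trans Subtype.range_coe ▸ hS

end Group.IsFinitelyPresented

/-- A central extension of a finitely presented group by a finitely generated abelian
group is finitely presented: if `A ≤ Z(G)` is finitely generated and `G/A` is finitely
presented, then `G` is finitely presented. -/
theorem central_extension_finitelyPresented {G : Type*} [Group G] (A : Subgroup G)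
    [A.Normal] (hA : A ≤ Subgroup.center G) (hAfg : A.FG)
    (hQ : IsFinitelyPresented (G ⧸ A)) : IsFinitelyPresented G := by
  let : CommGroup A :=
    { A.toGroup with mul_comm := fun a b => Subtype.ext (Subgroup.mem_center_iff.1 (hA b.2) a) }
  have : Group.FG A := (Group.fg_iff_subgroup_fg A).2 hAfg
  have := isFinitelyPresented_iff_group_isFinitelyPresented.1 hQ
  exact isFinitelyPresented_iff_group_isFinitelyPresented.2 (.of_extension A)
end
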